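/- For all distinct positive real numbers a and b, I(Q(a,b), G(a,b)) < A(a,b). -/

import Mathlib

/-!
The identric mean lies strictly below the arithmetic mean: `log I(x, y)` is the mean value of
`log` over `[y, x]`, which by concavity is less than `log` of the midpoint. Since `G < Q`, this
gives `I(Q, G) < A(Q, G)`, and `A(Q, G) ≤ Q(Q, G) = A(a, b)` because `Q² + G² = 2 A²`.
-/

noncomputable def A (a b : ℝ) : ℝ := (a + b) / 2
noncomputable def G (a b : ℝ) : ℝ := Real.sqrt (a * b)
noncomputable def Q (a b : ℝ) : ℝ := Real.sqrt ((a ^ 2 + b ^ 2) / 2)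
noncomputable def I (a b : ℝ) : ℝ := (1 / Real.exp 1) * (a ^ a / b ^ b) ^ (1 / (a - b))

open Real

lemma log_I {x y : ℝ} (hx : 0 < x) (hy : 0 < y) :
    log (I x y) = (x * log x - y * log y) / (x - y) - 1 := by
  rw [I, log_mul (by positivity) (by positivity), log_rpow (by positivity),
    log_div (x := x ^ x) (by positivity) (by positivity), log_rpow hx, log_rpow hy,
    one_div (exp 1), log_inv, log_exp]
  ring

lemma I_pos {x y : ℝ} (hx : 0 < x) (hy : 0 < y) : 0 < I x y := by
  unfold I
  positivity

/- As a function of `x ≥ y`, left side minus right side vanishes at `x = y` and has derivative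
`log (1 + u) - u < 0`, where `u = (x - y) / (x + y)`. -/
lemma mul_log_sub_mul_log_lt {x y : ℝ} (hy : 0 < y) (hyx : y < x) :
    x * log x - y * log y < (x - y) * (1 + log ((x + y) / 2)) := by
  set f : ℝ → ℝ := fun z ↦ z * log z - (z - y) * (1 + log ((z + y) / 2))
  have hf' : ∀ z, 0 < z → HasDerivAt f (log (1 + (z - y) / (z + y)) - (z - y) / (z + y)) z := by
    intro z hz
    have hlog : HasDerivAt (fun z ↦ log ((z + y) / 2)) (1 / (z + y)) z :=
      ((((hasDerivAt_id' z).add_const y).div_const 2).log (by positivity)).congr_deriv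
        (by field_simp)
    refine ((hasDerivAt_mul_log hz.ne').sub
      (((hasDerivAt_id' z).sub_const y).mul (hlog.const_add 1))).congr_deriv ?_
    rw [show 1 + (z - y) / (z + y) = z / ((z + y) / 2) by field_simp; ring,
      log_div hz.ne' (by positivity)]
    field_simp
    ring
  have hanti : StrictAntiOn f (Set.Ici y) := by
    refine strictAntiOn_of_deriv_neg (convex_Ici y)
      (fun z hz ↦ (hf' z (hy.trans_le hz)).continuousAt.continuousWithinAt) ?_
    intro z hz
    rw [interior_Ici] at hz
    have hu : 0 < (z - y) / (z + y) := div_pos (by linarith [hz.out]) (by linarith [hz.out])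
    rw [(hf' z (hy.trans hz)).deriv, sub_neg]
    linarith [log_lt_sub_one_of_pos (by positivity : 0 < 1 + (z - y) / (z + y)) (by linarith)]
  have hfx := hanti Set.self_mem_Ici hyx.le hyx
  simp only [f, sub_self, zero_mul, sub_zero] at hfx
  linarith

lemma I_lt_A {x y : ℝ} (hy : 0 < y) (hyx : y < x) : I x y < A x y := by
  have hx : 0 < x := hy.trans hyx
  rw [← log_lt_log_iff (I_pos hx hy) (by unfold A; positivity), log_I hx hy, A,
    sub_lt_iff_lt_add, div_lt_iff₀ (by linarith)]
  linarith [mul_log_sub_mul_log_lt hy hyx]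

lemma A_le_Q (x y : ℝ) : A x y ≤ Q x y :=
  le_sqrt_of_sq_le (by unfold A; nlinarith [sq_nonneg (x - y)])

lemma Q_Q_G_eq_A {a b : ℝ} (ha : 0 ≤ a) (hb : 0 ≤ b) : Q (Q a b) (G a b) = A a b := by
  rw [Q, Q, G, sq_sqrt (by positivity), sq_sqrt (by positivity), A,
    sqrt_eq_iff_eq_sq (by positivity) (by positivity)]
  ring

lemma G_lt_Q {a b : ℝ} (ha : 0 < a) (hb : 0 < b) (hab : a ≠ b) : G a b < Q a b :=
  sqrt_lt_sqrt (by positivity) (by nlinarith [sq_pos_of_ne_zero (sub_ne_zero.mpr hab)])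

theorem stmt_11 (a b : ℝ) (ha : 0 < a) (hb : 0 < b) (hab : a ≠ b) :
    I (Q a b) (G a b) < A a b :=
  calc I (Q a b) (G a b) < A (Q a b) (G a b) :=
        I_lt_A (sqrt_pos.mpr (by positivity)) (G_lt_Q ha hb hab)
    _ ≤ Q (Q a b) (G a b) := A_le_Q _ _
    _ = A a b := Q_Q_G_eq_A ha.le hb.le
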